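/- arXiv:2410.11192 — 2 statements merged into one kernel-verified Lean document; each statement's English description precedes it below -/
import Mathlib

section
/- If for every n ≥ 1 and all x, y ∈ [0,1] one has F^{(n)}(x,y) = F_X^{(n)}(x)·F_Y^{(n)}(y), then F(x,y) = F_X(x)·F_Y(y) for all x, y ∈ [0,1]; that is, the two coordinates are independent under μ. -/
open MeasureTheory Set Filter

/-- The dyadic lower approximation `t_n = ⌊2ⁿ t⌋ / 2ⁿ`. -/
noncomputable def dyadic (n : ℕ) (t : ℝ) : ℝ := ⌊(2 : ℝ) ^ n * t⌋ / 2 ^ n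

/-- The approximating joint distribution function `F⁽ⁿ⁾`. -/
noncomputable def Fapprox (F : ℝ → ℝ → ℝ) (n : ℕ) (x y : ℝ) : ℝ :=
  F (dyadic n x) (dyadic n y)
    + 2 ^ n * (x - dyadic n x) *
      (F (dyadic n x + 1 / 2 ^ n) (dyadic n y) - F (dyadic n x) (dyadic n y))
    + 2 ^ n * (y - dyadic n y) *
      (F (dyadic n x) (dyadic n y + 1 / 2 ^ n) - F (dyadic n x) (dyadic n y))
    + 2 ^ (2 * n) * (x - dyadic n x) * (y - dyadic n y) *
      (F (dyadic n x + 1 / 2 ^ n) (dyadic n y + 1 / 2 ^ n)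
        - F (dyadic n x + 1 / 2 ^ n) (dyadic n y)
        - F (dyadic n x) (dyadic n y + 1 / 2 ^ n)
        + F (dyadic n x) (dyadic n y))

/-- The approximating marginal distribution function `F_X⁽ⁿ⁾` (resp. `F_Y⁽ⁿ⁾`). -/
noncomputable def Mapprox (G : ℝ → ℝ) (n : ℕ) (x : ℝ) : ℝ :=
  G (dyadic n x) + 2 ^ n * (x - dyadic n x) * (G (dyadic n x + 1 / 2 ^ n) - G (dyadic n x))

lemma dyadic_int (n : ℕ) (k : ℤ) : dyadic n ((k : ℝ) / 2 ^ n) = (k : ℝ) / 2 ^ n := by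
  unfold dyadic
  have h : (2 : ℝ) ^ n * ((k : ℝ) / 2 ^ n) = (k : ℝ) := by
    field_simp
  rw [h, Int.floor_intCast]

lemma Fapprox_self {F : ℝ → ℝ → ℝ} {n : ℕ} {x y : ℝ}
    (hx : dyadic n x = x) (hy : dyadic n y = y) : Fapprox F n x y = F x y := by
  simp [Fapprox, hx, hy]

lemma Mapprox_self {G : ℝ → ℝ} {n : ℕ} {x : ℝ}
    (hx : dyadic n x = x) : Mapprox G n x = G x := by
  simp [Mapprox, hx]

/-- Dyadic approximation from above: antitone, above `t`, converging to `t`. -/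
lemma dy_above (t : ℝ) :
    Antitone (fun k : ℕ => ((⌊(2:ℝ) ^ (k+1) * t⌋ : ℝ) + 1) / 2 ^ (k+1)) ∧
    (∀ k : ℕ, t ≤ ((⌊(2:ℝ) ^ (k+1) * t⌋ : ℝ) + 1) / 2 ^ (k+1)) ∧
    Tendsto (fun k : ℕ => ((⌊(2:ℝ) ^ (k+1) * t⌋ : ℝ) + 1) / 2 ^ (k+1)) atTop (nhds t) := by
  have h2 : ∀ k : ℕ, (0:ℝ) < 2 ^ (k+1) := fun k => by positivity
  have hup : ∀ k : ℕ, ((⌊(2:ℝ) ^ (k+1) * t⌋ : ℝ) + 1) / 2 ^ (k+1) ≤ t + (1/2:ℝ) ^ (k+1) := by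
    intro k
    rw [div_le_iff₀ (h2 k)]
    have hone : (1/2:ℝ) ^ (k+1) * 2 ^ (k+1) = 1 := by
      rw [← mul_pow]; norm_num
    have hexp : (t + (1/2:ℝ) ^ (k+1)) * 2 ^ (k+1) = t * 2 ^ (k+1) + 1 := by
      rw [add_mul, hone]
    rw [hexp]
    have := Int.floor_le ((2:ℝ) ^ (k+1) * t)
    linarith
  have hge : ∀ k : ℕ, t ≤ ((⌊(2:ℝ) ^ (k+1) * t⌋ : ℝ) + 1) / 2 ^ (k+1) := by
    intro k
    rw [le_div_iff₀ (h2 k)]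
    have := Int.lt_floor_add_one ((2:ℝ) ^ (k+1) * t)
    linarith
  refine ⟨?_, hge, ?_⟩
  · apply antitone_nat_of_succ_le
    intro k
    have hfl : (⌊(2:ℝ) ^ (k+1+1) * t⌋ : ℝ) + 1 ≤ 2 * ((⌊(2:ℝ) ^ (k+1) * t⌋ : ℝ) + 1) := by
      have hlt : ⌊(2:ℝ) ^ (k+1+1) * t⌋ < 2 * ⌊(2:ℝ) ^ (k+1) * t⌋ + 2 := by
        rw [Int.floor_lt]
        push_cast
        have h1 : (2:ℝ) ^ (k+1+1) * t = 2 * ((2:ℝ) ^ (k+1) * t) := by ring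
        have h2' := Int.lt_floor_add_one ((2:ℝ) ^ (k+1) * t)
        rw [h1]; linarith
      have hle : ⌊(2:ℝ) ^ (k+1+1) * t⌋ ≤ 2 * ⌊(2:ℝ) ^ (k+1) * t⌋ + 1 := by omega
      have hle' : ((⌊(2:ℝ) ^ (k+1+1) * t⌋ : ℝ)) ≤ 2 * (⌊(2:ℝ) ^ (k+1) * t⌋ : ℝ) + 1 := by
        exact_mod_cast hle
      linarith
    calc ((⌊(2:ℝ) ^ (k+1+1) * t⌋ : ℝ) + 1) / 2 ^ (k+1+1)
        ≤ (2 * ((⌊(2:ℝ) ^ (k+1) * t⌋ : ℝ) + 1)) / 2 ^ (k+1+1) :=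
          (div_le_div_iff_of_pos_right (h2 (k+1))).mpr hfl
      _ = ((⌊(2:ℝ) ^ (k+1) * t⌋ : ℝ) + 1) / 2 ^ (k+1) := by
          rw [show ((2:ℝ) ^ (k+1+1)) = 2 ^ (k+1) * 2 from pow_succ 2 (k+1),
            mul_comm ((2:ℝ) ^ (k+1)) 2]
          exact mul_div_mul_left _ _ two_ne_zero
  · have hz : Tendsto (fun k : ℕ => t + (1/2:ℝ) ^ (k+1)) atTop (nhds t) := by
      have h0 : Tendsto (fun k : ℕ => (1/2:ℝ) ^ k) atTop (nhds 0) :=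
        tendsto_pow_atTop_nhds_zero_of_lt_one (by norm_num) (by norm_num)
      have h1 : Tendsto (fun k : ℕ => (1/2:ℝ) ^ (k+1)) atTop (nhds 0) :=
        h0.comp (tendsto_add_atTop_nat 1)
      simpa using tendsto_const_nhds.add h1
    exact tendsto_of_tendsto_of_tendsto_of_le_of_le tendsto_const_nhds hz hge hup

/-- If `F⁽ⁿ⁾(x,y) = F_X⁽ⁿ⁾(x) F_Y⁽ⁿ⁾(y)` for every `n ≥ 1` and all `x, y ∈ [0,1]`, then
`F(x,y) = F_X(x) F_Y(y)` for all `x, y ∈ [0,1]`, i.e. the coordinates are independent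
under `μ`. -/
theorem indep_of_dyadic_approx_factorizes
    (μ : Measure (ℝ × ℝ)) [IsProbabilityMeasure μ]
    (hμ : μ (Ioc (0 : ℝ) 1 ×ˢ Ioc (0 : ℝ) 1) = 1)
    (F : ℝ → ℝ → ℝ) (FX FY : ℝ → ℝ)
    (hF : ∀ x y, F x y = (μ (Iic x ×ˢ Iic y)).toReal)
    (hFX : ∀ x, FX x = F x 1) (hFY : ∀ y, FY y = F 1 y)
    (h : ∀ n : ℕ, 1 ≤ n → ∀ x ∈ Icc (0 : ℝ) 1, ∀ y ∈ Icc (0 : ℝ) 1,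
      Fapprox F n x y = Mapprox FX n x * Mapprox FY n y) :
    (∀ x ∈ Icc (0 : ℝ) 1, ∀ y ∈ Icc (0 : ℝ) 1, F x y = FX x * FY y) ∧
      μ = (μ.map Prod.fst).prod (μ.map Prod.snd) := by
  have hIm : MeasurableSet (Ioc (0:ℝ) 1 ×ˢ Ioc (0:ℝ) 1) :=
    measurableSet_Ioc.prod measurableSet_Ioc
  have hSc : μ ((Ioc (0:ℝ) 1 ×ˢ Ioc (0:ℝ) 1)ᶜ) = 0 := by
    rw [measure_compl hIm (measure_ne_top μ _), hμ, measure_univ, tsub_self]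
  have key : ∀ A B : Set ℝ, μ (A ×ˢ B) = μ ((A ∩ Ioc 0 1) ×ˢ (B ∩ Ioc 0 1)) := by
    intro A B
    rw [← prod_inter_prod, measure_inter_conull hSc]
  have keyAB : ∀ {A B A' B' : Set ℝ}, A ∩ Ioc 0 1 = A' ∩ Ioc 0 1 →
      B ∩ Ioc 0 1 = B' ∩ Ioc 0 1 → μ (A ×ˢ B) = μ (A' ×ˢ B') := by
    intro A B A' B' hA hB
    rw [key A B, key A' B', hA, hB]
  -- the clamp function
  set c : ℝ → ℝ := fun t => max 0 (min t 1) with hc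
  have hcmem : ∀ t, c t ∈ Icc (0:ℝ) 1 := fun t =>
    ⟨le_max_left _ _, max_le (by norm_num) (min_le_right _ _)⟩
  have hcIic : ∀ t : ℝ, Iic t ∩ Ioc 0 1 = Iic (c t) ∩ Ioc 0 1 := by
    intro t
    ext u
    simp only [mem_inter_iff, mem_Iic, mem_Ioc, hc]
    constructor
    · rintro ⟨h1, h2, h3⟩
      exact ⟨le_max_of_le_right (le_min h1 h3), h2, h3⟩
    · rintro ⟨h1, h2, h3⟩
      refine ⟨?_, h2, h3⟩
      rcases le_total (min t 1) 0 with hm | hm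
      · exact absurd (h1.trans (max_le le_rfl hm)) (not_le.mpr h2)
      · exact ((max_eq_right hm ▸ h1 : u ≤ min t 1)).trans (min_le_left _ _)
  have hunivI : (univ : Set ℝ) ∩ Ioc 0 1 = Iic 1 ∩ Ioc 0 1 := by
    rw [univ_inter, inter_eq_right.mpr (fun u hu => hu.2)]
  have hc1 : c 1 = 1 := by simp [hc]
  have hFclamp : ∀ x y : ℝ, F x y = F (c x) (c y) := fun x y => by
    rw [hF, hF, keyAB (hcIic x) (hcIic y)]
  have hFXc : ∀ x : ℝ, FX x = FX (c x) := fun x => by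
    rw [hFX x, hFX (c x), hFclamp x 1, hc1]
  have hFYc : ∀ y : ℝ, FY y = FY (c y) := fun y => by
    rw [hFY y, hFY (c y), hFclamp 1 y, hc1]
  -- factorization at dyadic points in [0,1]
  have base : ∀ n : ℕ, 1 ≤ n → ∀ k l : ℤ, 0 ≤ k → k ≤ 2 ^ n → 0 ≤ l → l ≤ 2 ^ n →
      F ((k:ℝ)/2^n) ((l:ℝ)/2^n) = FX ((k:ℝ)/2^n) * FY ((l:ℝ)/2^n) := by
    intro n hn k l hk0 hk1 hl0 hl1
    have h2 : (0:ℝ) < 2 ^ n := by positivity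
    have hx : ((k:ℝ)/2^n) ∈ Icc (0:ℝ) 1 := by
      constructor
      · exact div_nonneg (by exact_mod_cast hk0) h2.le
      · rw [div_le_one h2]; exact_mod_cast hk1
    have hy : ((l:ℝ)/2^n) ∈ Icc (0:ℝ) 1 := by
      constructor
      · exact div_nonneg (by exact_mod_cast hl0) h2.le
      · rw [div_le_one h2]; exact_mod_cast hl1
    have := h n hn _ hx _ hy
    rwa [Fapprox_self (dyadic_int n k) (dyadic_int n l), Mapprox_self (dyadic_int n k),
      Mapprox_self (dyadic_int n l)] at this
  -- factorization at all nonnegative dyadic points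
  have hdyad : ∀ n : ℕ, 1 ≤ n → ∀ k l : ℤ, 0 ≤ k → 0 ≤ l →
      F ((k:ℝ)/2^n) ((l:ℝ)/2^n) = FX ((k:ℝ)/2^n) * FY ((l:ℝ)/2^n) := by
    intro n hn k l hk hl
    have h2 : (0:ℝ) < 2 ^ n := by positivity
    have trunc : ∀ k : ℤ, 0 ≤ k → ∃ k' : ℤ, 0 ≤ k' ∧ k' ≤ 2 ^ n ∧
        Iic ((k:ℝ)/2^n) ∩ Ioc 0 1 = Iic ((k':ℝ)/2^n) ∩ Ioc 0 1 := by
      intro k hk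
      rcases le_or_gt k (2 ^ n) with hle | hgt
      · exact ⟨k, hk, hle, rfl⟩
      · refine ⟨2 ^ n, by positivity, le_rfl, ?_⟩
        have he : ((2 ^ n : ℤ):ℝ)/2^n = 1 := by push_cast; field_simp
        rw [he]
        have hge1 : (1:ℝ) ≤ (k:ℝ)/2^n := by
          rw [le_div_iff₀ h2]
          have : ((2^n : ℤ) : ℝ) ≤ (k:ℝ) := by exact_mod_cast hgt.le
          push_cast at this ⊢
          linarith
        rw [inter_eq_right.mpr (fun u hu => hu.2.trans hge1),
          inter_eq_right.mpr (fun u hu => hu.2)]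
    obtain ⟨k', hk'0, hk'1, hkeq⟩ := trunc k hk
    obtain ⟨l', hl'0, hl'1, hleq⟩ := trunc l hl
    have e1 : F ((k:ℝ)/2^n) ((l:ℝ)/2^n) = F ((k':ℝ)/2^n) ((l':ℝ)/2^n) := by
      rw [hF, hF, keyAB hkeq hleq]
    have e2 : FX ((k:ℝ)/2^n) = FX ((k':ℝ)/2^n) := by
      rw [hFX, hFX, hF, hF, keyAB hkeq rfl]
    have e3 : FY ((l:ℝ)/2^n) = FY ((l':ℝ)/2^n) := by
      rw [hFY, hFY, hF, hF, keyAB rfl hleq]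
    rw [e1, e2, e3]
    exact base n hn k' l' hk'0 hk'1 hl'0 hl'1
  -- right-continuity limit lemma
  have hlim : ∀ (u v : ℕ → ℝ) (x y : ℝ), Antitone u → Antitone v →
      (∀ k, x ≤ u k) → (∀ k, y ≤ v k) →
      Tendsto u atTop (nhds x) → Tendsto v atTop (nhds y) →
      Tendsto (fun k => F (u k) (v k)) atTop (nhds (F x y)) := by
    intro u v x y hu hv hxu hyv hul hvl
    have hiInter : (⋂ k, (Iic (u k) ×ˢ Iic (v k) : Set (ℝ × ℝ))) = Iic x ×ˢ Iic y := by
      ext p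
      simp only [mem_iInter, mem_prod, mem_Iic]
      constructor
      · intro hp
        exact ⟨ge_of_tendsto' hul (fun k => (hp k).1), ge_of_tendsto' hvl (fun k => (hp k).2)⟩
      · intro hp k
        exact ⟨hp.1.trans (hxu k), hp.2.trans (hyv k)⟩
    have hmono : Antitone (fun k => (Iic (u k) ×ˢ Iic (v k) : Set (ℝ × ℝ))) :=
      fun i j hij => prod_mono (Iic_subset_Iic.mpr (hu hij)) (Iic_subset_Iic.mpr (hv hij))
    have ht := tendsto_measure_iInter_atTop (μ := μ)
      (fun k => (measurableSet_Iic.prod measurableSet_Iic).nullMeasurableSet)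
      hmono ⟨0, measure_ne_top μ _⟩
    rw [hiInter] at ht
    have ht2 := (ENNReal.tendsto_toReal (measure_ne_top μ (Iic x ×ˢ Iic y))).comp ht
    simp only [Function.comp_def] at ht2
    simpa only [hF] using ht2
  -- factorization on [0,1]²
  have main : ∀ x ∈ Icc (0:ℝ) 1, ∀ y ∈ Icc (0:ℝ) 1, F x y = FX x * FY y := by
    intro x hx y hy
    set u : ℕ → ℝ := fun k => ((⌊(2:ℝ) ^ (k+1) * x⌋ : ℝ) + 1) / 2 ^ (k+1) with hu
    set v : ℕ → ℝ := fun k => ((⌊(2:ℝ) ^ (k+1) * y⌋ : ℝ) + 1) / 2 ^ (k+1) with hv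
    obtain ⟨hua, hux, hul⟩ := dy_above x
    obtain ⟨hva, hvy, hvl⟩ := dy_above y
    have hfac : ∀ k, F (u k) (v k) = FX (u k) * FY (v k) := by
      intro k
      have e1 : u k = ((⌊(2:ℝ) ^ (k+1) * x⌋ + 1 : ℤ) : ℝ) / 2 ^ (k+1) := by
        rw [hu]; push_cast; ring
      have e2 : v k = ((⌊(2:ℝ) ^ (k+1) * y⌋ + 1 : ℤ) : ℝ) / 2 ^ (k+1) := by
        rw [hv]; push_cast; ring
      have hnx : (0:ℤ) ≤ ⌊(2:ℝ) ^ (k+1) * x⌋ + 1 := by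
        have := Int.floor_nonneg.mpr
          (mul_nonneg (by positivity : (0:ℝ) ≤ 2 ^ (k+1)) hx.1)
        omega
      have hny : (0:ℤ) ≤ ⌊(2:ℝ) ^ (k+1) * y⌋ + 1 := by
        have := Int.floor_nonneg.mpr
          (mul_nonneg (by positivity : (0:ℝ) ≤ 2 ^ (k+1)) hy.1)
        omega
      rw [e1, e2]
      exact hdyad (k+1) (Nat.le_add_left 1 k) _ _ hnx hny
    have t1 : Tendsto (fun k => F (u k) (v k)) atTop (nhds (F x y)) :=
      hlim u v x y hua hva hux hvy hul hvl
    have t2 : Tendsto (fun k => FX (u k)) atTop (nhds (FX x)) := by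
      have := hlim u (fun _ => 1) x 1 hua (fun _ _ _ => le_rfl) hux (fun _ => le_rfl)
        hul tendsto_const_nhds
      simpa only [← hFX] using this
    have t3 : Tendsto (fun k => FY (v k)) atTop (nhds (FY y)) := by
      have := hlim (fun _ => 1) v 1 y (fun _ _ _ => le_rfl) hva (fun _ => le_rfl) hvy
        tendsto_const_nhds hvl
      simpa only [← hFY] using this
    exact tendsto_nhds_unique (t1.congr hfac) (t2.mul t3)
  refine ⟨main, ?_⟩
  -- part 2: the measure is the product of its marginals
  haveI hp1 : IsProbabilityMeasure (μ.map Prod.fst) :=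
    Measure.isProbabilityMeasure_map measurable_fst.aemeasurable
  haveI hp2 : IsProbabilityMeasure (μ.map Prod.snd) :=
    Measure.isProbabilityMeasure_map measurable_snd.aemeasurable
  have hrect : ∀ a b : ℝ, μ (Iic a ×ˢ Iic b) =
      ((μ.map Prod.fst).prod (μ.map Prod.snd)) (Iic a ×ˢ Iic b) := by
    intro a b
    have hpre1 : Prod.fst ⁻¹' (Iic a) = (Iic a ×ˢ (univ : Set ℝ) : Set (ℝ × ℝ)) := by
      ext p; simp
    have hpre2 : Prod.snd ⁻¹' (Iic b) = ((univ : Set ℝ) ×ˢ Iic b : Set (ℝ × ℝ)) := by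
      ext p; simp
    have hν : ((μ.map Prod.fst).prod (μ.map Prod.snd)) (Iic a ×ˢ Iic b) =
        μ (Iic a ×ˢ (univ : Set ℝ)) * μ ((univ : Set ℝ) ×ˢ Iic b) := by
      rw [Measure.prod_prod, Measure.map_apply measurable_fst measurableSet_Iic,
        Measure.map_apply measurable_snd measurableSet_Iic, hpre1, hpre2]
    have e1 : μ (Iic a ×ˢ (univ : Set ℝ)) = μ (Iic (c a) ×ˢ Iic 1) := keyAB (hcIic a) hunivI
    have e2 : μ ((univ : Set ℝ) ×ˢ Iic b) = μ (Iic 1 ×ˢ Iic (c b)) := keyAB hunivI (hcIic b)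
    have e3 : μ (Iic a ×ˢ Iic b) = μ (Iic (c a) ×ˢ Iic (c b)) := keyAB (hcIic a) (hcIic b)
    rw [e3, hν, e1, e2]
    have hnum := main (c a) (hcmem a) (c b) (hcmem b)
    simp only [hFX, hFY, hF] at hnum
    refine (ENNReal.toReal_eq_toReal_iff' (measure_ne_top μ _)
      (ENNReal.mul_ne_top (measure_ne_top μ _) (measure_ne_top μ _))).mp ?_
    rw [ENNReal.toReal_mul]
    exact hnum
  have hR : (Real.measurableSpace : MeasurableSpace ℝ) =
      MeasurableSpace.generateFrom (range Iic) :=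
    (BorelSpace.measurable_eq).trans (borel_eq_generateFrom_Iic ℝ)
  have hcs : IsCountablySpanning (range (Iic : ℝ → Set ℝ)) := by
    refine ⟨fun n => Iic (n : ℝ), fun n => mem_range_self _, ?_⟩
    ext x
    simp only [mem_iUnion, mem_Iic, mem_univ, iff_true]
    exact exists_nat_ge x
  have hgen := generateFrom_prod_eq hcs hcs
  rw [← hR] at hgen
  have hpi : IsPiSystem (image2 (· ×ˢ ·) (range (Iic : ℝ → Set ℝ)) (range (Iic : ℝ → Set ℝ))) := by
    rintro _ ⟨s, ⟨a, rfl⟩, t, ⟨b, rfl⟩, rfl⟩ _ ⟨s', ⟨a', rfl⟩, t', ⟨b', rfl⟩, rfl⟩ _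
    rw [prod_inter_prod, Iic_inter_Iic, Iic_inter_Iic]
    exact mem_image2_of_mem (mem_range_self _) (mem_range_self _)
  refine ext_of_generate_finite _ hgen hpi ?_ ?_
  · rintro s ⟨_, ⟨a, rfl⟩, _, ⟨b, rfl⟩, rfl⟩
    exact hrect a b
  · simp [measure_univ]
end

section
/- For every n ≥ 1 and all x, y ∈ [0,1], the integral of f^{(n)} over [0,x]×[0,y] equals F^{(n)}(x,y); in particular F^{(n)}(x,1) = F_X^{(n)}(x) and F^{(n)}(1,y) = F_Y^{(n)}(y), so F_X^{(n)} and F_Y^{(n)} are the marginal distribution functions of the distribution with density f^{(n)}. -/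
open MeasureTheory Set

/-- The approximating density `f⁽ⁿ⁾`. -/
noncomputable def fdens (F : ℝ → ℝ → ℝ) (n : ℕ) (x y : ℝ) : ℝ :=
  2 ^ (2 * n) *
    (F (dyadic n x + 1 / 2 ^ n) (dyadic n y + 1 / 2 ^ n)
      - F (dyadic n x + 1 / 2 ^ n) (dyadic n y)
      - F (dyadic n x) (dyadic n y + 1 / 2 ^ n)
      + F (dyadic n x) (dyadic n y))

lemma measurable_floorcomp (n : ℕ) (c : ℤ → ℝ) :
    Measurable fun t : ℝ => c ⌊(2:ℝ)^n * t⌋ :=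
  (measurable_of_countable c).comp (Int.measurable_floor.comp (measurable_id.const_mul _))

lemma intervalIntegrable_floorcomp (n : ℕ) (c : ℤ → ℝ) (a b : ℝ) :
    IntervalIntegrable (fun t => c ⌊(2:ℝ)^n * t⌋) volume a b := by
  have hE : (0:ℝ) < 2^n := by positivity
  rw [intervalIntegrable_iff]
  have hne : (Finset.Icc ⌊(2:ℝ)^n * (a ⊓ b)⌋ ⌊(2:ℝ)^n * (a ⊔ b)⌋).Nonempty := by
    refine Finset.nonempty_Icc.mpr (Int.floor_le_floor ?_)
    have h1 : a ⊓ b ≤ a ⊔ b := le_trans inf_le_left le_sup_left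
    nlinarith
  refine Measure.integrableOn_of_bounded
    (M := (Finset.Icc ⌊(2:ℝ)^n * (a ⊓ b)⌋ ⌊(2:ℝ)^n * (a ⊔ b)⌋).sup' hne fun k => ‖c k‖)
    measure_Ioc_lt_top.ne (measurable_floorcomp n c).aestronglyMeasurable ?_
  filter_upwards [ae_restrict_mem measurableSet_uIoc] with t ht
  rw [Set.uIoc] at ht
  refine Finset.le_sup' (fun k => ‖c k‖) (Finset.mem_Icc.mpr ⟨?_, ?_⟩)
  · exact Int.floor_le_floor (by nlinarith [ht.1])
  · exact Int.floor_le_floor (by nlinarith [ht.2])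

lemma integral_floorcomp (n : ℕ) (c : ℤ → ℝ) {x : ℝ} (hx : 0 ≤ x) :
    ∫ t in Icc (0:ℝ) x, c ⌊(2:ℝ)^n * t⌋
      = (∑ k ∈ Finset.range ⌊(2:ℝ)^n * x⌋₊, c (k:ℤ)) / 2^n
        + (x - dyadic n x) * c ⌊(2:ℝ)^n * x⌋ := by
  have hE : (0:ℝ) < 2^n := by positivity
  set K := ⌊(2:ℝ)^n * x⌋₊ with hKdef
  have hnn : (0:ℝ) ≤ 2^n * x := by positivity
  have hKZ : ((K:ℤ)) = ⌊(2:ℝ)^n * x⌋ := Int.natCast_floor_eq_floor hnn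
  have hKR : ((K:ℝ)) = ((⌊(2:ℝ)^n * x⌋ : ℤ) : ℝ) := by exact_mod_cast congrArg (fun z : ℤ => (z:ℝ)) hKZ
  have hKle : (K:ℝ) ≤ 2^n * x := by rw [hKR]; exact Int.floor_le _
  have hlt : 2^n * x < (K:ℝ) + 1 := by rw [hKR]; exact Int.lt_floor_add_one _
  have hdy : dyadic n x = (K:ℝ)/2^n := by rw [dyadic, ← hKR]
  have hKx : (K:ℝ)/2^n ≤ x := by rw [div_le_iff₀ hE, mul_comm]; exact hKle
  have hpiece : ∀ (a b : ℝ) (m : ℤ), a ≤ b → (m:ℝ) ≤ 2^n*a → 2^n*b ≤ (m:ℝ)+1 →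
      ∫ t in a..b, c ⌊(2:ℝ)^n * t⌋ = (b - a) * c m := by
    intro a b m hab h1 h2
    rw [intervalIntegral.integral_of_le hab, MeasureTheory.integral_Ioc_eq_integral_Ioo]
    rw [setIntegral_congr_fun measurableSet_Ioo (g := fun _ => c m) ?_, setIntegral_const,
      measureReal_def, Real.volume_Ioo, ENNReal.toReal_ofReal (by linarith), smul_eq_mul, mul_comm]
    intro t ht
    have h3 : (m:ℝ) ≤ 2^n * t := le_trans h1 (by nlinarith [ht.1])
    have h4 : 2^n * t < (m:ℝ)+1 := lt_of_lt_of_le (by nlinarith [ht.2]) h2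
    simp only
    rw [Int.floor_eq_iff.mpr ⟨h3, h4⟩]
  rw [MeasureTheory.integral_Icc_eq_integral_Ioc, ← intervalIntegral.integral_of_le hx]
  rw [← intervalIntegral.integral_add_adjacent_intervals (b := (K:ℝ)/2^n)
    (intervalIntegrable_floorcomp n c _ _) (intervalIntegrable_floorcomp n c _ _)]
  have hadj := intervalIntegral.sum_integral_adjacent_intervals
    (f := fun t => c ⌊(2:ℝ)^n * t⌋) (μ := volume) (a := fun k : ℕ => (k:ℝ)/2^n) (n := K)
    (fun k _ => intervalIntegrable_floorcomp n c _ _)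
  simp only [Nat.cast_zero, zero_div] at hadj
  have hpk : ∀ k : ℕ, ∫ t in ((k:ℝ)/2^n)..(((k+1:ℕ)):ℝ)/2^n, c ⌊(2:ℝ)^n * t⌋ = c (k:ℤ)/2^n := by
    intro k
    have e1 : 2^n * ((k:ℝ)/2^n) = (k:ℝ) := by field_simp
    have e2 : 2^n * ((((k+1:ℕ)):ℝ)/2^n) = (k:ℝ)+1 := by push_cast; field_simp
    have hab : ((k:ℝ))/2^n ≤ (((k+1:ℕ)):ℝ)/2^n := by
      gcongr
      push_cast; linarith
    rw [hpiece _ _ (k:ℤ) hab (by rw [e1]; push_cast; exact le_rfl)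
      (by rw [e2]; push_cast; exact le_rfl)]
    push_cast
    ring
  have h1 : ∫ t in (0:ℝ)..((K:ℝ)/2^n), c ⌊(2:ℝ)^n * t⌋
      = (∑ k ∈ Finset.range K, c (k:ℤ))/2^n := by
    rw [← hadj, Finset.sum_congr rfl (fun k _ => hpk k), ← Finset.sum_div]
  have h2 : ∫ t in ((K:ℝ)/2^n)..x, c ⌊(2:ℝ)^n * t⌋
      = (x - (K:ℝ)/2^n) * c ⌊(2:ℝ)^n * x⌋ := by
    rw [← hKZ]
    refine hpiece _ _ ((K:ℕ):ℤ) hKx ?_ ?_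
    · rw [show (2:ℝ)^n * ((K:ℝ)/2^n) = (K:ℝ) by field_simp]; push_cast; exact le_rfl
    · push_cast; exact hlt.le
  rw [h1, h2, hdy]

lemma integrableOn_floorcomp2 (n : ℕ) (g : ℤ → ℤ → ℝ) {x y : ℝ} (hx : 0 ≤ x) (hy : 0 ≤ y) :
    IntegrableOn (fun p : ℝ × ℝ => g ⌊(2:ℝ)^n * p.1⌋ ⌊(2:ℝ)^n * p.2⌋)
      (Icc 0 x ×ˢ Icc 0 y) ((volume : Measure ℝ).prod volume) := by
  have hE : (0:ℝ) < 2^n := by positivity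
  have hm : Measurable fun p : ℝ × ℝ => g ⌊(2:ℝ)^n * p.1⌋ ⌊(2:ℝ)^n * p.2⌋ := by
    have h1 : Measurable fun p : ℝ × ℝ => (⌊(2:ℝ)^n * p.1⌋, ⌊(2:ℝ)^n * p.2⌋) :=
      (Int.measurable_floor.comp (measurable_fst.const_mul _)).prod
        (Int.measurable_floor.comp (measurable_snd.const_mul _))
    exact (measurable_of_countable fun q : ℤ × ℤ => g q.1 q.2).comp h1
  have hfin : ((volume : Measure ℝ).prod volume) (Icc 0 x ×ˢ Icc 0 y) ≠ ⊤ := by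
    rw [Measure.prod_prod]
    exact (ENNReal.mul_lt_top measure_Icc_lt_top measure_Icc_lt_top).ne
  have hne : ((Finset.Icc (0:ℤ) ⌊(2:ℝ)^n * x⌋) ×ˢ (Finset.Icc (0:ℤ) ⌊(2:ℝ)^n * y⌋)).Nonempty := by
    refine Finset.Nonempty.product ?_ ?_ <;>
      exact Finset.nonempty_Icc.mpr (Int.floor_nonneg.mpr (by positivity))
  refine Measure.integrableOn_of_bounded
    (M := ((Finset.Icc (0:ℤ) ⌊(2:ℝ)^n * x⌋) ×ˢ (Finset.Icc (0:ℤ) ⌊(2:ℝ)^n * y⌋)).sup' hne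
      fun q => ‖g q.1 q.2‖)
    hfin hm.aestronglyMeasurable ?_
  filter_upwards [ae_restrict_mem (measurableSet_Icc.prod measurableSet_Icc)] with p hp
  refine Finset.le_sup' (α := ℝ) (fun q : ℤ × ℤ => ‖g q.1 q.2‖)
    (b := (⌊(2:ℝ)^n * p.1⌋, ⌊(2:ℝ)^n * p.2⌋)) (Finset.mem_product.mpr ⟨?_, ?_⟩)
  · exact Finset.mem_Icc.mpr ⟨Int.floor_nonneg.mpr (by nlinarith [hp.1.1]),
      Int.floor_le_floor (by nlinarith [hp.1.2])⟩
  · exact Finset.mem_Icc.mpr ⟨Int.floor_nonneg.mpr (by nlinarith [hp.2.1]),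
      Int.floor_le_floor (by nlinarith [hp.2.2])⟩

lemma integral_floorcomp2 (n : ℕ) (g : ℤ → ℤ → ℝ) {x y : ℝ} (hx : 0 ≤ x) (hy : 0 ≤ y) :
    ∫ p in Icc (0:ℝ) x ×ˢ Icc (0:ℝ) y, g ⌊(2:ℝ)^n * p.1⌋ ⌊(2:ℝ)^n * p.2⌋
      = (∑ k ∈ Finset.range ⌊(2:ℝ)^n * x⌋₊,
          ((∑ j ∈ Finset.range ⌊(2:ℝ)^n * y⌋₊, g (k:ℤ) (j:ℤ))/2^n
            + (y - dyadic n y) * g (k:ℤ) ⌊(2:ℝ)^n * y⌋))/2^n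
        + (x - dyadic n x) *
          ((∑ j ∈ Finset.range ⌊(2:ℝ)^n * y⌋₊, g ⌊(2:ℝ)^n * x⌋ (j:ℤ))/2^n
            + (y - dyadic n y) * g ⌊(2:ℝ)^n * x⌋ ⌊(2:ℝ)^n * y⌋) := by
  rw [show (volume : Measure (ℝ × ℝ)) = (volume : Measure ℝ).prod volume from Measure.volume_eq_prod ℝ ℝ]
  rw [setIntegral_prod _ (integrableOn_floorcomp2 n g hx hy)]
  have hin : ∀ s : ℝ, (∫ t in Icc (0:ℝ) y, g ⌊(2:ℝ)^n * s⌋ ⌊(2:ℝ)^n * t⌋)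
      = (fun k : ℤ => (∑ j ∈ Finset.range ⌊(2:ℝ)^n * y⌋₊, g k (j:ℤ))/2^n
          + (y - dyadic n y) * g k ⌊(2:ℝ)^n * y⌋) ⌊(2:ℝ)^n * s⌋ :=
    fun s => integral_floorcomp n (fun j => g ⌊(2:ℝ)^n * s⌋ j) hy
  calc (∫ s in Icc (0:ℝ) x, ∫ t in Icc (0:ℝ) y, g ⌊(2:ℝ)^n * s⌋ ⌊(2:ℝ)^n * t⌋)
      = ∫ s in Icc (0:ℝ) x, (fun k : ℤ =>
          (∑ j ∈ Finset.range ⌊(2:ℝ)^n * y⌋₊, g k (j:ℤ))/2^n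
            + (y - dyadic n y) * g k ⌊(2:ℝ)^n * y⌋) ⌊(2:ℝ)^n * s⌋ :=
        integral_congr_ae (Filter.Eventually.of_forall hin)
    _ = _ := by
        simpa using integral_floorcomp n (fun k : ℤ =>
          (∑ j ∈ Finset.range ⌊(2:ℝ)^n * y⌋₊, g k (j:ℤ))/2^n
            + (y - dyadic n y) * g k ⌊(2:ℝ)^n * y⌋) hx

noncomputable def gaux (F : ℝ → ℝ → ℝ) (n : ℕ) (k j : ℤ) : ℝ :=
  2 ^ (2 * n) *
    (F ((k:ℝ)/2^n + 1/2^n) ((j:ℝ)/2^n + 1/2^n)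
      - F ((k:ℝ)/2^n + 1/2^n) ((j:ℝ)/2^n)
      - F ((k:ℝ)/2^n) ((j:ℝ)/2^n + 1/2^n)
      + F ((k:ℝ)/2^n) ((j:ℝ)/2^n))

lemma fdens_eq (F : ℝ → ℝ → ℝ) (n : ℕ) (s t : ℝ) :
    fdens F n s t = gaux F n ⌊(2:ℝ)^n * s⌋ ⌊(2:ℝ)^n * t⌋ := rfl

set_option maxHeartbeats 1000000 in
lemma main_calc (F : ℝ → ℝ → ℝ) (n : ℕ) (hFx0 : ∀ s, F s 0 = 0) (hF0y : ∀ t, F 0 t = 0)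
    {x y : ℝ} (hx : 0 ≤ x) (hy : 0 ≤ y) :
    (∑ k ∈ Finset.range ⌊(2:ℝ)^n * x⌋₊,
        ((∑ j ∈ Finset.range ⌊(2:ℝ)^n * y⌋₊, gaux F n (k:ℤ) (j:ℤ))/2^n
          + (y - dyadic n y) * gaux F n (k:ℤ) ⌊(2:ℝ)^n * y⌋))/2^n
      + (x - dyadic n x) *
        ((∑ j ∈ Finset.range ⌊(2:ℝ)^n * y⌋₊, gaux F n ⌊(2:ℝ)^n * x⌋ (j:ℤ))/2^n
          + (y - dyadic n y) * gaux F n ⌊(2:ℝ)^n * x⌋ ⌊(2:ℝ)^n * y⌋)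
      = Fapprox F n x y := by
  have hE : (0:ℝ) < 2^n := by positivity
  have h2n : (2:ℝ)^(2*n) = 2^n * 2^n := by rw [two_mul, pow_add]
  have hyc : ((⌊(2:ℝ)^n * y⌋₊ : ℕ) : ℝ)/2^n = dyadic n y := by
    have h := Int.natCast_floor_eq_floor (R := ℝ) (by positivity : (0:ℝ) ≤ 2^n * y)
    rw [dyadic, ← h]
    push_cast
    ring
  have hxc : ((⌊(2:ℝ)^n * x⌋₊ : ℕ) : ℝ)/2^n = dyadic n x := by
    have h := Int.natCast_floor_eq_floor (R := ℝ) (by positivity : (0:ℝ) ≤ 2^n * x)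
    rw [dyadic, ← h]
    push_cast
    ring
  have hsum1 : ∀ k : ℤ, (∑ j ∈ Finset.range ⌊(2:ℝ)^n * y⌋₊, gaux F n k (j:ℤ))
      = 2^(2*n) * (F ((k:ℝ)/2^n + 1/2^n) (dyadic n y) - F ((k:ℝ)/2^n) (dyadic n y)) := by
    intro k
    calc (∑ j ∈ Finset.range ⌊(2:ℝ)^n * y⌋₊, gaux F n k (j:ℤ))
        = ∑ j ∈ Finset.range ⌊(2:ℝ)^n * y⌋₊,
            ((fun j : ℕ => 2^(2*n) * (F ((k:ℝ)/2^n + 1/2^n) ((j:ℝ)/2^n)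
              - F ((k:ℝ)/2^n) ((j:ℝ)/2^n))) (j+1)
            - (fun j : ℕ => 2^(2*n) * (F ((k:ℝ)/2^n + 1/2^n) ((j:ℝ)/2^n)
              - F ((k:ℝ)/2^n) ((j:ℝ)/2^n))) j) := by
          refine Finset.sum_congr rfl fun j _ => ?_
          simp only [gaux]
          push_cast
          ring_nf
      _ = _ := by
          rw [Finset.sum_range_sub (fun j : ℕ => 2^(2*n) * (F ((k:ℝ)/2^n + 1/2^n) ((j:ℝ)/2^n)
              - F ((k:ℝ)/2^n) ((j:ℝ)/2^n))) ⌊(2:ℝ)^n * y⌋₊]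
          simp only [Nat.cast_zero, zero_div, hFx0, hyc]
          ring
  have hsum1' : ∀ k : ℤ, (∑ j ∈ Finset.range ⌊(2:ℝ)^n * y⌋₊, gaux F n k (j:ℤ))/2^n
      = 2^n * (F ((k:ℝ)/2^n + 1/2^n) (dyadic n y) - F ((k:ℝ)/2^n) (dyadic n y)) := by
    intro k
    rw [hsum1 k, h2n]
    field_simp
  have hsum2 : (∑ k ∈ Finset.range ⌊(2:ℝ)^n * x⌋₊,
        ((∑ j ∈ Finset.range ⌊(2:ℝ)^n * y⌋₊, gaux F n (k:ℤ) (j:ℤ))/2^n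
          + (y - dyadic n y) * gaux F n (k:ℤ) ⌊(2:ℝ)^n * y⌋))
      = 2^n * F (dyadic n x) (dyadic n y)
        + (y - dyadic n y) * (2^n * 2^n) *
          (F (dyadic n x) (dyadic n y + 1/2^n) - F (dyadic n x) (dyadic n y)) := by
    calc (∑ k ∈ Finset.range ⌊(2:ℝ)^n * x⌋₊,
          ((∑ j ∈ Finset.range ⌊(2:ℝ)^n * y⌋₊, gaux F n (k:ℤ) (j:ℤ))/2^n
            + (y - dyadic n y) * gaux F n (k:ℤ) ⌊(2:ℝ)^n * y⌋))
        = ∑ k ∈ Finset.range ⌊(2:ℝ)^n * x⌋₊,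
            ((fun k : ℕ => 2^n * F ((k:ℝ)/2^n) (dyadic n y)
              + (y - dyadic n y) * (2^n * 2^n) *
                (F ((k:ℝ)/2^n) (dyadic n y + 1/2^n) - F ((k:ℝ)/2^n) (dyadic n y))) (k+1)
            - (fun k : ℕ => 2^n * F ((k:ℝ)/2^n) (dyadic n y)
              + (y - dyadic n y) * (2^n * 2^n) *
                (F ((k:ℝ)/2^n) (dyadic n y + 1/2^n) - F ((k:ℝ)/2^n) (dyadic n y))) k) := by
          refine Finset.sum_congr rfl fun k _ => ?_
          rw [hsum1' (k:ℤ)]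
          simp only [gaux, dyadic, h2n]
          push_cast
          ring_nf
      _ = _ := by
          rw [Finset.sum_range_sub (fun k : ℕ => 2^n * F ((k:ℝ)/2^n) (dyadic n y)
              + (y - dyadic n y) * (2^n * 2^n) *
                (F ((k:ℝ)/2^n) (dyadic n y + 1/2^n) - F ((k:ℝ)/2^n) (dyadic n y)))
              ⌊(2:ℝ)^n * x⌋₊]
          simp only [Nat.cast_zero, zero_div, hF0y, hxc]
          ring
  have hsum2' : (∑ k ∈ Finset.range ⌊(2:ℝ)^n * x⌋₊,
        ((∑ j ∈ Finset.range ⌊(2:ℝ)^n * y⌋₊, gaux F n (k:ℤ) (j:ℤ))/2^n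
          + (y - dyadic n y) * gaux F n (k:ℤ) ⌊(2:ℝ)^n * y⌋))/2^n
      = F (dyadic n x) (dyadic n y)
        + (y - dyadic n y) * 2^n *
          (F (dyadic n x) (dyadic n y + 1/2^n) - F (dyadic n x) (dyadic n y)) := by
    rw [hsum2]
    field_simp
  rw [hsum2', hsum1' ⌊(2:ℝ)^n * x⌋]
  simp only [Fapprox, gaux, dyadic, h2n]
  ring
/-- For every `n ≥ 1` and all `x, y ∈ [0,1]`, the integral of `f⁽ⁿ⁾` over `[0,x] × [0,y]`
equals `F⁽ⁿ⁾(x,y)`; in particular `F⁽ⁿ⁾(x,1) = F_X⁽ⁿ⁾(x)` and `F⁽ⁿ⁾(1,y) = F_Y⁽ⁿ⁾(y)`,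
so `F_X⁽ⁿ⁾` and `F_Y⁽ⁿ⁾` are the marginal distribution functions of the distribution
with density `f⁽ⁿ⁾`. -/
theorem integral_fdens_eq_Fapprox
    (μ : Measure (ℝ × ℝ)) [IsProbabilityMeasure μ]
    (hμ : μ (Ioc (0 : ℝ) 1 ×ˢ Ioc (0 : ℝ) 1) = 1)
    (F : ℝ → ℝ → ℝ) (FX FY : ℝ → ℝ)
    (hF : ∀ x y, F x y = (μ (Iic x ×ˢ Iic y)).toReal)
    (hFX : ∀ x, FX x = F x 1) (hFY : ∀ y, FY y = F 1 y)
    (n : ℕ) (hn : 1 ≤ n) :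
    (∀ x ∈ Icc (0 : ℝ) 1, ∀ y ∈ Icc (0 : ℝ) 1,
      ∫ p in (Icc (0 : ℝ) x ×ˢ Icc (0 : ℝ) y), fdens F n p.1 p.2 = Fapprox F n x y) ∧
    (∀ x ∈ Icc (0 : ℝ) 1, Fapprox F n x 1 = Mapprox FX n x) ∧
    (∀ y ∈ Icc (0 : ℝ) 1, Fapprox F n 1 y = Mapprox FY n y) := by
  have hE : (0:ℝ) < 2^n := by positivity
  have hcompl : μ ((Ioc (0:ℝ) 1 ×ˢ Ioc (0:ℝ) 1)ᶜ) = 0 := by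
    rw [measure_compl (measurableSet_Ioc.prod measurableSet_Ioc) (measure_ne_top μ _), hμ,
      measure_univ, tsub_self]
  have hFx0 : ∀ s, F s 0 = 0 := by
    intro s
    rw [hF]
    have h0 : μ (Iic s ×ˢ Iic (0:ℝ)) = 0 := by
      refine measure_mono_null ?_ hcompl
      rintro ⟨a, b⟩ ⟨-, hb⟩
      exact fun hmem => (not_lt.mpr hb) hmem.2.1
    rw [h0, ENNReal.toReal_zero]
  have hF0y : ∀ t, F 0 t = 0 := by
    intro t
    rw [hF]
    have h0 : μ (Iic (0:ℝ) ×ˢ Iic t) = 0 := by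
      refine measure_mono_null ?_ hcompl
      rintro ⟨a, b⟩ ⟨ha, -⟩
      exact fun hmem => (not_lt.mpr ha) hmem.1.1
    rw [h0, ENNReal.toReal_zero]
  have hdy1 : dyadic n 1 = 1 := by
    rw [dyadic, mul_one, show ((2:ℝ)^n) = (((2^n : ℤ)):ℝ) by push_cast; ring,
      Int.floor_intCast]
    push_cast
    exact div_self (ne_of_gt hE)
  refine ⟨?_, ?_, ?_⟩
  · intro x hx y hy
    have h1 : (∫ p in Icc (0:ℝ) x ×ˢ Icc (0:ℝ) y, fdens F n p.1 p.2)
        = ∫ p in Icc (0:ℝ) x ×ˢ Icc (0:ℝ) y, gaux F n ⌊(2:ℝ)^n * p.1⌋ ⌊(2:ℝ)^n * p.2⌋ := by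
      simp only [fdens_eq]
    rw [h1, integral_floorcomp2 n (gaux F n) hx.1 hy.1]
    exact main_calc F n hFx0 hF0y hx.1 hy.1
  · intro x hx
    simp only [Fapprox, Mapprox, hFX, hdy1, sub_self, mul_zero, zero_mul, add_zero]
  · intro y hy
    simp only [Fapprox, Mapprox, hFY, hdy1, sub_self, mul_zero, zero_mul, add_zero]
end
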